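/- The scoring function ρ is positive definite: ρ(x,y) > 0 whenever x ≠ y, and ρ(x,x) = 0. -/
import Mathlib


open Filter Topology
open scoped Classical

noncomputable def delegate {X : Type*} [MetricSpace X] (r : ℕ → X) : ℕ → X → X
  | 0, _ => r 0
  | n+1, x => if dist x (delegate r n x) ≤ dist x (r (n+1)) then delegate r n x else r (n+1)

noncomputable def score {X : Type*} [MetricSpace X] (r : ℕ → X) (a : ℕ → ℝ) (x y : X) : ℝ :=
  ∑' i, if delegate r i x ≠ delegate r i y then a i else 0

lemma del_le_rn {X : Type*} [MetricSpace X] (r : ℕ → X) (x : X) (n : ℕ) :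
    dist x (delegate r n x) ≤ dist x (r n) := by
  cases n with
  | zero => simp [delegate]
  | succ n =>
    rw [delegate]
    split
    · assumption
    · exact le_refl _

lemma del_anti {X : Type*} [MetricSpace X] (r : ℕ → X) (x : X) {m n : ℕ} (h : m ≤ n) :
    dist x (delegate r n x) ≤ dist x (delegate r m x) := by
  induction n with
  | zero => simp_all
  | succ n ih =>
    rcases Nat.lt_or_ge m (n+1) with h' | h'
    · have := ih (Nat.lt_succ_iff.mp h')
      refine le_trans ?_ this
      rw [delegate]
      split
      · exact le_refl _
      · next hc => exact le_of_not_ge hc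
    · have : m = n + 1 := le_antisymm h h'
      subst this; exact le_refl _

lemma del_le {X : Type*} [MetricSpace X] (r : ℕ → X) (x : X) {m n : ℕ} (h : m ≤ n) :
    dist x (delegate r n x) ≤ dist x (r m) :=
  le_trans (del_anti r x h) (del_le_rn r x m)

theorem stmt7 {X : Type*} [MetricSpace X] (r : ℕ → X) (hr : Function.Injective r)
    (hd : DenseRange r) (a : ℕ → ℝ) (ha : ∀ n, 0 < a n) (hmono : Antitone a)
    (hsum : Summable a) :
    (∀ x y : X, x ≠ y → 0 < score r a x y) ∧ (∀ x : X, score r a x x = 0) := by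
  constructor
  · intro x y hxy
    have hdpos : 0 < dist x y := dist_pos.mpr hxy
    obtain ⟨mx, hmx⟩ := hd.exists_dist_lt x (by positivity : (0:ℝ) < dist x y / 2)
    obtain ⟨my, hmy⟩ := hd.exists_dist_lt y (by positivity : (0:ℝ) < dist x y / 2)
    set n := max mx my
    have hx : dist x (delegate r n x) < dist x y / 2 :=
      lt_of_le_of_lt (del_le r x (le_max_left mx my)) hmx
    have hy : dist y (delegate r n y) < dist x y / 2 :=
      lt_of_le_of_lt (del_le r y (le_max_right mx my)) hmy
    have hne : delegate r n x ≠ delegate r n y := by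
      intro he
      have : dist x y ≤ dist x (delegate r n x) + dist y (delegate r n y) := by
        have h1 : dist x y ≤ dist x (delegate r n y) + dist (delegate r n y) y :=
          dist_triangle _ _ _
        rw [dist_comm (delegate r n y) y] at h1
        rw [he] at hx
        linarith
      linarith
    have hnonneg : ∀ i, 0 ≤ (if delegate r i x ≠ delegate r i y then a i else 0) := by
      intro i; split
      · exact (ha i).le
      · exact le_refl _
    have hs : Summable (fun i => if delegate r i x ≠ delegate r i y then a i else 0) := by
      refine Summable.of_nonneg_of_le hnonneg (fun i => ?_) hsum
      split
      · exact le_refl _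
      · exact (ha i).le
    refine Summable.tsum_pos hs hnonneg n ?_
    rw [if_pos hne]
    exact ha n
  · intro x
    simp [score]
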